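/- For each n ∈ ℕ, lim_{r→0+} L(r)/log^n(1/r) = 0 and lim_{r→∞} L(r)/log^n(r) = 0. -/

import Mathlib

open Real MeasureTheory Filter Topology Set

/-!
Every iterate `F^k` has derivative `∏_{j<k} (F^j)⁻¹`, and truncating the product defining `F̃`
after `n + 1` factors (all of them `≥ 1`) gives `1 / F̃ ≤ a ^ n (F^{n+1})'`. Integrating from `a`,
a fixed point of `F`, yields `0 ≤ L(r) ≤ a ^ n (F^{n+1}(ar) - a)` for `r ≥ 1`. Since
`F(ar) - a = log r` and `F(x) - a = log (x / a)`, the right-hand side is eventually at most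
`a ^ n log^{n+1} r = o(log^n r)`. The behaviour at `0⁺` follows from `L(r) = -L(1/r)`.
-/

/-- `F(u) = a - log a + log u`. -/
noncomputable def Fa (a : ℝ) : ℝ → ℝ := fun u => a - Real.log a + Real.log u

/-- `F̃(u) = a · ∏_{k=0}^∞ (F^k(u)/a)`. -/
noncomputable def Ftilde (a : ℝ) (u : ℝ) : ℝ := a * ∏' k : ℕ, ((Fa a)^[k] u / a)

/-- `φ(u) = a + ∫_a^u dt / F̃(t)`. -/
noncomputable def phiFun (a : ℝ) (u : ℝ) : ℝ := a + ∫ t in a..u, 1 / Ftilde a t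

/-- The super-logarithm: `L(r) = φ(ar) - a` for `r ≥ 1` and `L(r) = -L(1/r)` for `0 < r < 1`. -/
noncomputable def superLog (a : ℝ) (r : ℝ) : ℝ :=
  if 1 ≤ r then phiFun a (a * r) - a else -(phiFun a (a * (1 / r)) - a)

section FaIterate

variable {a u : ℝ}

lemma le_Fa_iterate (ha : 0 < a) (hu : a ≤ u) (k : ℕ) : a ≤ (Fa a)^[k] u := by
  induction k with
  | zero => exact hu
  | succ k ih =>
    rw [Function.iterate_succ_apply']
    have := Real.log_le_log ha ih
    simp only [Fa]
    linarith

lemma Fa_iterate_pos (ha : 0 < a) (hu : a ≤ u) (k : ℕ) : 0 < (Fa a)^[k] u :=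
  ha.trans_le (le_Fa_iterate ha hu k)

lemma Fa_sub_eq_log_div (ha : 0 < a) {v : ℝ} (hv : 0 < v) : Fa a v - a = Real.log (v / a) := by
  rw [Real.log_div hv.ne' ha.ne', Fa]
  ring

lemma Fa_iterate_self (m : ℕ) : (Fa a)^[m] a = a :=
  Function.iterate_fixed (by simp [Fa]) m

lemma Fa_iterate_sub_le (ha : 0 < a) (hu : a ≤ u) (k : ℕ) :
    (Fa a)^[k] u - a ≤ (u - a) / a ^ k := by
  induction k with
  | zero => simp
  | succ k ih =>
    set v := (Fa a)^[k] u
    have hv : 0 < v := Fa_iterate_pos ha hu k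
    calc (Fa a)^[k + 1] u - a = Real.log (v / a) := by
          rw [Function.iterate_succ_apply', Fa_sub_eq_log_div ha hv]
      _ ≤ v / a - 1 := Real.log_le_sub_one_of_pos (div_pos hv ha)
      _ = (v - a) / a := by field_simp
      _ ≤ (u - a) / a ^ k / a := by gcongr
      _ = (u - a) / a ^ (k + 1) := by rw [div_div, pow_succ]

lemma hasDerivAt_Fa_iterate (ha : 0 < a) (hu : a ≤ u) (m : ℕ) :
    HasDerivAt ((Fa a)^[m]) (∏ k ∈ Finset.range m, ((Fa a)^[k] u)⁻¹) u := by
  induction m with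
  | zero => simpa using hasDerivAt_id u
  | succ m ih =>
    have hF : HasDerivAt (Fa a) ((Fa a)^[m] u)⁻¹ ((Fa a)^[m] u) :=
      (Real.hasDerivAt_log (Fa_iterate_pos ha hu m).ne').const_add _
    rw [Function.iterate_succ', Finset.prod_range_succ, mul_comm]
    exact hF.comp u ih

end FaIterate

section Ftilde

variable {a u : ℝ}

lemma summable_log_Fa_iterate_div (ha : 1 < a) (hu : a ≤ u) :
    Summable fun k : ℕ => Real.log ((Fa a)^[k] u / a) := by
  have ha0 : 0 < a := by linarith
  have hgeom : Summable fun k : ℕ => (u - a) / a * (1 / a) ^ k :=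
    (summable_geometric_of_lt_one (by positivity) ((div_lt_one ha0).2 ha)).mul_left _
  refine hgeom.of_nonneg_of_le
    (fun k => Real.log_nonneg ((one_le_div ha0).2 (le_Fa_iterate ha0 hu k))) fun k => ?_
  calc Real.log ((Fa a)^[k] u / a) = (Fa a)^[k + 1] u - a := by
        rw [Function.iterate_succ_apply', Fa_sub_eq_log_div ha0 (Fa_iterate_pos ha0 hu k)]
    _ ≤ (u - a) / a ^ (k + 1) := Fa_iterate_sub_le ha0 hu (k + 1)
    _ = (u - a) / a * (1 / a) ^ k := by rw [div_pow, one_pow, pow_succ']; field_simp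

lemma Ftilde_eq_mul_exp_tsum (ha : 1 < a) (hu : a ≤ u) :
    Ftilde a u = a * rexp (∑' k : ℕ, Real.log ((Fa a)^[k] u / a)) := by
  rw [Real.rexp_tsum_eq_tprod (fun k => div_pos (Fa_iterate_pos (by linarith) hu k) (by linarith))
    (summable_log_Fa_iterate_div ha hu), Ftilde]

lemma Ftilde_pos (ha : 1 < a) (hu : a ≤ u) : 0 < Ftilde a u := by
  rw [Ftilde_eq_mul_exp_tsum ha hu]
  have : 0 < a := by linarith
  positivity

lemma mul_prod_Fa_iterate_div_le_Ftilde (ha : 1 < a) (hu : a ≤ u) (s : Finset ℕ) :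
    a * ∏ k ∈ s, ((Fa a)^[k] u / a) ≤ Ftilde a u := by
  have ha0 : 0 < a := by linarith
  have hpos k : 0 < (Fa a)^[k] u / a := div_pos (Fa_iterate_pos ha0 hu k) ha0
  rw [Ftilde_eq_mul_exp_tsum ha hu, ← Finset.prod_congr rfl fun k _ => Real.exp_log (hpos k),
    ← Real.exp_sum]
  gcongr
  exact (summable_log_Fa_iterate_div ha hu).sum_le_tsum s
    fun k _ => Real.log_nonneg ((one_le_div ha0).2 (le_Fa_iterate ha0 hu k))

lemma one_div_Ftilde_le (ha : 1 < a) (hu : a ≤ u) (n : ℕ) :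
    1 / Ftilde a u ≤ a ^ n * ∏ k ∈ Finset.range (n + 1), ((Fa a)^[k] u)⁻¹ := by
  have ha0 : 0 < a := by linarith
  have hP : 0 < ∏ k ∈ Finset.range (n + 1), (Fa a)^[k] u :=
    Finset.prod_pos fun k _ => Fa_iterate_pos ha0 hu k
  have hle := mul_prod_Fa_iterate_div_le_Ftilde ha hu (Finset.range (n + 1))
  rw [Finset.prod_div_distrib, Finset.prod_const, Finset.card_range, pow_succ'] at hle
  rw [Finset.prod_inv_distrib, ← div_eq_mul_inv, div_le_div_iff₀ (Ftilde_pos ha hu) hP, one_mul]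
  calc ∏ k ∈ Finset.range (n + 1), (Fa a)^[k] u
      = a ^ n * (a * ((∏ k ∈ Finset.range (n + 1), (Fa a)^[k] u) / (a * a ^ n))) := by
        field_simp
    _ ≤ a ^ n * Ftilde a u := by gcongr

end Ftilde

section phiFun

variable {a b : ℝ}

lemma phiFun_sub_eq_integral : phiFun a b - a = ∫ t in a..b, 1 / Ftilde a t := by
  rw [phiFun, add_sub_cancel_left]

lemma phiFun_sub_nonneg (ha : 1 < a) (hb : a ≤ b) : 0 ≤ phiFun a b - a := by
  rw [phiFun_sub_eq_integral]
  exact intervalIntegral.integral_nonneg hb fun t ht => (one_div_pos.2 (Ftilde_pos ha ht.1)).le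

lemma phiFun_sub_le (ha : 1 < a) (hb : a ≤ b) (n : ℕ) :
    phiFun a b - a ≤ a ^ n * ((Fa a)^[n + 1] b - a) := by
  have ha0 : 0 < a := by linarith
  set g : ℝ → ℝ := fun t => a ^ n * ∏ k ∈ Finset.range (n + 1), ((Fa a)^[k] t)⁻¹
  have hderiv : ∀ t ∈ Icc a b, HasDerivAt (fun t => a ^ n * (Fa a)^[n + 1] t) (g t) t :=
    fun t ht => (hasDerivAt_Fa_iterate ha0 ht.1 (n + 1)).const_mul _
  have hg : ContinuousOn g (Icc a b) :=
    continuousOn_const.mul <| continuousOn_finsetProd _ fun k _ t ht =>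
      (hasDerivAt_Fa_iterate ha0 ht.1 k).continuousAt.continuousWithinAt.inv₀
        (Fa_iterate_pos ha0 ht.1 k).ne'
  have hFTC : ∫ t in a..b, g t = a ^ n * ((Fa a)^[n + 1] b - a) := by
    rw [intervalIntegral.integral_eq_sub_of_hasDerivAt (by rwa [uIcc_of_le hb])
      (hg.intervalIntegrable_of_Icc hb), Fa_iterate_self, mul_sub]
  rw [phiFun_sub_eq_integral, ← hFTC, intervalIntegral.integral_of_le hb,
    intervalIntegral.integral_of_le hb]
  -- `integral_mono_of_nonneg` needs no integrability of `1 / F̃`, only its nonnegativity.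
  refine integral_mono_of_nonneg ?_ ((hg.integrableOn_Icc).mono_set Ioc_subset_Icc_self) ?_
  · filter_upwards [ae_restrict_mem measurableSet_Ioc] with t ht
    exact (one_div_pos.2 (Ftilde_pos ha ht.1.le)).le
  · filter_upwards [ae_restrict_mem measurableSet_Ioc] with t ht
    exact one_div_Ftilde_le ha ht.1.le n

end phiFun

lemma tendsto_log_iterate_atTop (n : ℕ) : Tendsto (Real.log^[n]) atTop atTop := by
  induction n with
  | zero => exact tendsto_id
  | succ n ih => exact Function.iterate_succ' Real.log n ▸ Real.tendsto_log_atTop.comp ih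

lemma tendsto_log_iterate_succ_div_log_iterate (n : ℕ) :
    Tendsto (fun r => Real.log^[n + 1] r / Real.log^[n] r) atTop (𝓝 0) := by
  refine (Real.isLittleO_log_id_atTop.tendsto_div_nhds_zero.comp
    (tendsto_log_iterate_atTop n)).congr fun r => ?_
  rw [Function.comp_apply, id, Function.iterate_succ_apply']

section superLog

variable {a r : ℝ}

lemma eventually_Fa_iterate_mul_sub_le_log_iterate (ha : 1 < a) (n : ℕ) :
    ∀ᶠ r in atTop, (Fa a)^[n + 1] (a * r) - a ≤ Real.log^[n + 1] r := by
  have ha0 : 0 < a := by linarith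
  induction n with
  | zero =>
    filter_upwards [eventually_gt_atTop 0] with r hr
    rw [Function.iterate_one, Function.iterate_one, Fa_sub_eq_log_div ha0 (by positivity),
      mul_div_cancel_left₀ _ ha0.ne']
  | succ n ih =>
    have hlarge := (tendsto_log_iterate_atTop (n + 1)).eventually_ge_atTop (a / (a - 1))
    filter_upwards [ih, hlarge, eventually_ge_atTop 1] with r hxy hy hr
    set x := (Fa a)^[n + 1] (a * r)
    set y := Real.log^[n + 1] r
    have hx : a ≤ x := le_Fa_iterate ha0 (le_mul_of_one_le_right ha0.le hr) _
    -- `y ≥ a / (a - 1)` is what makes `x ≤ y + a` imply `x ≤ a y`.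
    have hxy' : x ≤ a * y := by
      rw [div_le_iff₀ (by linarith)] at hy
      linarith
    rw [Function.iterate_succ_apply' (Fa a), Function.iterate_succ_apply' Real.log,
      Fa_sub_eq_log_div ha0 (by linarith)]
    exact Real.log_le_log (div_pos (by linarith) ha0) ((div_le_iff₀' ha0).2 hxy')

lemma superLog_of_lt_one (hr0 : 0 < r) (hr1 : r < 1) : superLog a r = -superLog a (1 / r) := by
  rw [superLog, superLog, if_neg hr1.not_ge, if_pos ((one_le_div hr0).2 hr1.le)]

lemma tendsto_superLog_div_log_iterate_atTop (ha : 1 < a) (n : ℕ) :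
    Tendsto (fun r => superLog a r / Real.log^[n] r) atTop (𝓝 0) := by
  have ha0 : 0 < a := by linarith
  have hbound : ∀ᶠ r in atTop, 0 ≤ superLog a r ∧ superLog a r ≤ a ^ n * Real.log^[n + 1] r := by
    filter_upwards [eventually_ge_atTop 1, eventually_Fa_iterate_mul_sub_le_log_iterate ha n]
      with r hr hF
    have har : a ≤ a * r := le_mul_of_one_le_right ha0.le hr
    rw [superLog, if_pos hr]
    exact ⟨phiFun_sub_nonneg ha har,
      (phiFun_sub_le ha har n).trans (mul_le_mul_of_nonneg_left hF (by positivity))⟩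
  have hlog := (tendsto_log_iterate_atTop n).eventually_gt_atTop 0
  refine tendsto_of_tendsto_of_tendsto_of_le_of_le' tendsto_const_nhds
    (by simpa using (tendsto_log_iterate_succ_div_log_iterate n).const_mul (a ^ n)) ?_ ?_
  · filter_upwards [hbound, hlog] with r hr hpos
    exact div_nonneg hr.1 hpos.le
  · filter_upwards [hbound, hlog] with r hr hpos
    rw [← mul_div_assoc]
    exact div_le_div_of_nonneg_right hr.2 hpos.le

end superLog

/-- For each `n ∈ ℕ`, `lim_{r→0+} L(r)/log^n(1/r) = 0` and `lim_{r→∞} L(r)/log^n(r) = 0`,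
where `log^n` is the `n`-fold iterated logarithm. -/
theorem stmt6 (a : ℝ) (ha : 1 < a) (n : ℕ) :
    Filter.Tendsto (fun r : ℝ => superLog a r / Real.log^[n] (1 / r))
      (nhdsWithin 0 (Set.Ioi 0)) (nhds 0) ∧
    Filter.Tendsto (fun r : ℝ => superLog a r / Real.log^[n] r) Filter.atTop (nhds 0) := by
  have hatTop := tendsto_superLog_div_log_iterate_atTop ha n
  refine ⟨?_, hatTop⟩
  have hinv : Tendsto (fun r : ℝ => 1 / r) (𝓝[>] 0) atTop := by
    simpa only [one_div] using tendsto_inv_nhdsGT_zero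
  have hneg := (hatTop.comp hinv).neg
  rw [neg_zero] at hneg
  refine hneg.congr' ?_
  filter_upwards [Ioo_mem_nhdsGT one_pos] with r hr
  simp only [Function.comp_apply, superLog_of_lt_one hr.1 hr.2, neg_div]
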